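/- arXiv:1905.02957 — 4 statements merged into one kernel-verified Lean document; each statement's English description precedes it below -/
import Mathlib

section
/- Let γ ∈ (0,1] and for each t ≥ 1 let β_{2t} satisfy 1 - 1/t ≤ β_{2t} ≤ 1 - γ/t. Let g : ℕ → ℝ be any sequence. Then for all t ≥ 1, t · ∑_{j=1}^{t} (∏_{k=1}^{t-j} β_{2(t-k+1)}) (1 - β_{2j}) g(j)² ≥ γ ∑_{j=1}^{t} g(j)². -/
lemma prod_lb (γ : ℝ) (hγ0 : 0 < γ) (β2 : ℕ → ℝ)
    (hβ2 : ∀ t : ℕ, 1 ≤ t → 1 - 1 / (t : ℝ) ≤ β2 t ∧ β2 t ≤ 1 - γ / (t : ℝ)) :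
    ∀ n j : ℕ, 1 ≤ j →
      (j : ℝ) / (j + n) ≤ ∏ k ∈ Finset.Icc 1 n, β2 (j + n - k + 1) := by
  intro n
  induction n with
  | zero =>
    intro j hj
    have hne : (j:ℝ) ≠ 0 := Nat.cast_ne_zero.mpr (by omega)
    simp [div_self hne]
  | succ n ih =>
    intro j hj
    rw [Finset.prod_Icc_succ_top (by omega)]
    have h1 : j + (n + 1) - (n + 1) + 1 = j + 1 := by omega
    have h2 : ∀ k ∈ Finset.Icc 1 n, β2 (j + (n + 1) - k + 1) = β2 ((j + 1) + n - k + 1) := by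
      intro k hk
      simp only [Finset.mem_Icc] at hk
      congr 1
      omega
    rw [h1, Finset.prod_congr rfl h2]
    have hih := ih (j + 1) (by omega)
    have hb : 1 - 1 / ((j + 1 : ℕ) : ℝ) ≤ β2 (j + 1) := (hβ2 (j + 1) (by omega)).1
    have hjpos : (0 : ℝ) < (j : ℝ) := by exact_mod_cast Nat.pos_of_ne_zero (by omega)
    have hj1pos : (0 : ℝ) < (j : ℝ) + 1 := by linarith
    have hbd : (j : ℝ) / (j + 1) ≤ β2 (j + 1) := by
      push_cast at hb ⊢
      rw [div_le_iff₀ hj1pos]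
      have hinv : (1 / ((j:ℝ)+1)) * ((j:ℝ)+1) = 1 := by field_simp
      nlinarith [mul_le_mul_of_nonneg_right hb (le_of_lt hj1pos)]
    have hprodnn : (0 : ℝ) ≤ ∏ k ∈ Finset.Icc 1 n, β2 ((j + 1) + n - k + 1) := by
      have : (0 : ℝ) ≤ ((j : ℝ) + 1) / ((j : ℝ) + 1 + n) := by positivity
      calc (0:ℝ) ≤ ((j:ℝ)+1) / ((j:ℝ)+1+n) := this
        _ ≤ _ := by push_cast at hih ⊢; linarith [hih]
    have key : (j : ℝ) / (j + (n + 1)) ≤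
        (((j : ℝ) + 1) / ((j : ℝ) + 1 + n)) * ((j : ℝ) / (j + 1)) := by
      rw [div_mul_div_comm]
      push_cast
      rw [div_le_div_iff₀ (by positivity) (by positivity)]
      ring_nf
      nlinarith
    push_cast
    calc (j : ℝ) / (j + (n + 1))
        ≤ (((j : ℝ) + 1) / ((j : ℝ) + 1 + n)) * ((j : ℝ) / (j + 1)) := key
      _ ≤ (∏ k ∈ Finset.Icc 1 n, β2 ((j + 1) + n - k + 1)) * β2 (j + 1) := by
          apply mul_le_mul
          · push_cast at hih ⊢; linarith
          · exact hbd
          · positivity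
          · exact hprodnn

theorem stmt_3 (γ : ℝ) (hγ0 : 0 < γ) (hγ1 : γ ≤ 1) (β2 : ℕ → ℝ)
    (hβ2 : ∀ t : ℕ, 1 ≤ t → 1 - 1 / (t : ℝ) ≤ β2 t ∧ β2 t ≤ 1 - γ / (t : ℝ))
    (g : ℕ → ℝ) :
    ∀ t : ℕ, 1 ≤ t →
      (t : ℝ) * ∑ j ∈ Finset.Icc 1 t,
          (∏ k ∈ Finset.Icc 1 (t - j), β2 (t - k + 1)) * (1 - β2 j) * (g j) ^ 2
        ≥ γ * ∑ j ∈ Finset.Icc 1 t, (g j) ^ 2 := by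
  intro t ht
  have htpos : (0 : ℝ) < (t : ℝ) := by exact_mod_cast Nat.pos_of_ne_zero (by omega)
  have hterm : ∀ j ∈ Finset.Icc 1 t,
      γ / t * (g j) ^ 2 ≤
        (∏ k ∈ Finset.Icc 1 (t - j), β2 (t - k + 1)) * (1 - β2 j) * (g j) ^ 2 := by
    intro j hj
    simp only [Finset.mem_Icc] at hj
    obtain ⟨hj1, hjt⟩ := hj
    have hjpos : (0 : ℝ) < (j : ℝ) := by exact_mod_cast Nat.pos_of_ne_zero (by omega)
    have hP : (j : ℝ) / t ≤ ∏ k ∈ Finset.Icc 1 (t - j), β2 (t - k + 1) := by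
      have := prod_lb γ hγ0 β2 hβ2 (t - j) j hj1
      have he : ∀ k ∈ Finset.Icc 1 (t - j), β2 (j + (t - j) - k + 1) = β2 (t - k + 1) := by
        intro k hk; simp only [Finset.mem_Icc] at hk; congr 1; omega
      rw [Finset.prod_congr rfl he] at this
      have hcast : ((j : ℝ) + ((t - j : ℕ) : ℝ)) = (t : ℝ) := by
        push_cast [Nat.cast_sub hjt]; ring
      rwa [hcast] at this
    have h1β : γ / j ≤ 1 - β2 j := by
      have := (hβ2 j hj1).2
      linarith
    have hfac : γ / t ≤ (∏ k ∈ Finset.Icc 1 (t - j), β2 (t - k + 1)) * (1 - β2 j) := by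
      have h0 : γ / t = ((j : ℝ) / t) * (γ / j) := by
        field_simp
      rw [h0]
      apply mul_le_mul hP h1β (by positivity) (le_trans (by positivity) hP)
    have hg : (0 : ℝ) ≤ (g j) ^ 2 := sq_nonneg _
    exact mul_le_mul_of_nonneg_right hfac hg
  have hsum := Finset.sum_le_sum hterm
  rw [← Finset.mul_sum] at hsum
  have : γ * ∑ j ∈ Finset.Icc 1 t, (g j) ^ 2
      = (t : ℝ) * (γ / t * ∑ j ∈ Finset.Icc 1 t, (g j) ^ 2) := by
    field_simp
  rw [ge_iff_le, this]
  exact mul_le_mul_of_nonneg_left hsum (le_of_lt htpos)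
end

section
/- Let γ ∈ (0,1], G_∞ > 0, and g : ℕ → ℝ with |g(t)| ≤ G_∞ for all t. Define v₀ = 0 and v_t = β_{2t} v_{t-1} + (1 - β_{2t}) g(t)² where 1 - 1/t ≤ β_{2t} ≤ 1 - γ/t. Then for all t ≥ 1, t·v_t - (t-1)·v_{t-1} ≤ (2 - γ) G_∞². -/
theorem stmt_4 (γ G : ℝ) (hγ0 : 0 < γ) (hγ1 : γ ≤ 1) (hG : 0 < G)
    (g : ℕ → ℝ) (hg : ∀ t, |g t| ≤ G)
    (β2 v : ℕ → ℝ)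
    (hβ2 : ∀ t : ℕ, 1 ≤ t → 1 - 1 / (t : ℝ) ≤ β2 t ∧ β2 t ≤ 1 - γ / (t : ℝ))
    (hv0 : v 0 = 0)
    (hv : ∀ t : ℕ, 1 ≤ t → v t = β2 t * v (t - 1) + (1 - β2 t) * (g t) ^ 2) :
    ∀ t : ℕ, 1 ≤ t → (t : ℝ) * v t - ((t : ℝ) - 1) * v (t - 1) ≤ (2 - γ) * G ^ 2 := by
  have hg2 : ∀ t, (g t) ^ 2 ≤ G ^ 2 := by
    intro t
    have := hg t
    have h1 : -G ≤ g t := (abs_le.mp this).1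
    have h2 : g t ≤ G := (abs_le.mp this).2
    nlinarith
  -- bounds on β2
  have hβbounds : ∀ t : ℕ, 1 ≤ t → 0 ≤ β2 t ∧ β2 t ≤ 1 := by
    intro t ht
    have htR : (1 : ℝ) ≤ (t : ℝ) := by exact_mod_cast ht
    obtain ⟨hl, hr⟩ := hβ2 t ht
    have htpos : (0 : ℝ) < t := by linarith
    constructor
    · have : 1 / (t : ℝ) ≤ 1 := by
        rw [div_le_one htpos]; exact htR
      linarith
    · have : 0 < γ / (t : ℝ) := div_pos hγ0 htpos
      linarith
  have hvbound : ∀ n : ℕ, 0 ≤ v n ∧ v n ≤ G ^ 2 := by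
    intro n
    induction n with
    | zero => simp [hv0]; positivity
    | succ k ih =>
      have hk1 : 1 ≤ k + 1 := Nat.le_add_left 1 k
      have hrec := hv (k + 1) hk1
      simp only [Nat.add_sub_cancel] at hrec
      obtain ⟨hβ0, hβ1⟩ := hβbounds (k + 1) hk1
      have hg2' := hg2 (k + 1)
      have hgnn : 0 ≤ (g (k + 1)) ^ 2 := sq_nonneg _
      constructor
      · rw [hrec]; nlinarith [ih.1]
      · rw [hrec]; nlinarith [ih.1, ih.2]
  intro t ht
  have htR : (1 : ℝ) ≤ (t : ℝ) := by exact_mod_cast ht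
  have htpos : (0 : ℝ) < t := by linarith
  obtain ⟨hl, hr⟩ := hβ2 t ht
  have hrec := hv t ht
  have hcast : ((t - 1 : ℕ) : ℝ) = (t : ℝ) - 1 := by
    have : 1 ≤ t := ht
    push_cast [Nat.cast_sub this]
    ring
  obtain ⟨hv1nn, hv1le⟩ := hvbound (t - 1)
  have hg2' := hg2 t
  have hgnn : 0 ≤ (g t) ^ 2 := sq_nonneg _
  -- t(1-β2 t) ≥ γ and ≤ 1
  have h1 : (t : ℝ) * (1 - β2 t) ≤ 1 := by
    have := mul_le_mul_of_nonneg_left (by linarith : 1 - β2 t ≤ 1 / (t : ℝ)) (le_of_lt htpos)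
    calc (t : ℝ) * (1 - β2 t) ≤ (t : ℝ) * (1 / (t : ℝ)) := this
      _ = 1 := by field_simp
  have h2 : γ ≤ (t : ℝ) * (1 - β2 t) := by
    have := mul_le_mul_of_nonneg_left (by linarith : γ / (t : ℝ) ≤ 1 - β2 t) (le_of_lt htpos)
    calc γ = (t : ℝ) * (γ / (t : ℝ)) := by field_simp
      _ ≤ (t : ℝ) * (1 - β2 t) := this
  rw [hrec]
  -- t v_t - (t-1) v_{t-1} = (1 - t(1-β))v_{t-1} + t(1-β) g²
  nlinarith [mul_le_mul_of_nonneg_left hg2' (by nlinarith : (0:ℝ) ≤ (t:ℝ) * (1 - β2 t)),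
    mul_le_mul_of_nonneg_right (by linarith : 1 - (t:ℝ)*(1-β2 t) ≤ 1 - γ) hv1nn,
    mul_le_mul_of_nonneg_left hv1le (by linarith : (0:ℝ) ≤ 1 - γ)]
end

section
/- Let β₁ ∈ [0,1), {β_{1j}} with β_{1j} ≤ β₁ for all j, and g(1),...,g(T) real. Define ĝ_T = ∑_{j=1}^{T} (1 - β_{1j}) (∏_{k=1}^{T-j} β_{1(T-k+1)}) g(j). Then ĝ_T² ≤ (1/(1-β₁)) ∑_{j=1}^{T} β₁^{T-j} g(j)². -/
theorem stmt_8 (β₁ : ℝ) (h0 : 0 ≤ β₁) (h1 : β₁ < 1)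
    (β1 : ℕ → ℝ) (hβ1 : ∀ j, 0 ≤ β1 j ∧ β1 j ≤ β₁)
    (g : ℕ → ℝ) (T : ℕ)
    (ghatT : ℝ)
    (hghat : ghatT = ∑ j ∈ Finset.Icc 1 T,
        (1 - β1 j) * (∏ k ∈ Finset.Icc 1 (T - j), β1 (T - k + 1)) * g j) :
    ghatT ^ 2 ≤ (1 / (1 - β₁)) * ∑ j ∈ Finset.Icc 1 T, β₁ ^ (T - j) * (g j) ^ 2 := by
  set a : ℕ → ℝ := fun j => (1 - β1 j) * (∏ k ∈ Finset.Icc 1 (T - j), β1 (T - k + 1)) with ha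
  have hpos : 0 < 1 - β₁ := by linarith
  have ha0 : ∀ j, 0 ≤ a j := by
    intro j
    refine mul_nonneg (by have := (hβ1 j).2; linarith) ?_
    exact Finset.prod_nonneg fun k _ => (hβ1 _).1
  have hab : ∀ j, a j ≤ β₁ ^ (T - j) := by
    intro j
    calc a j ≤ 1 * ∏ k ∈ Finset.Icc 1 (T - j), β1 (T - k + 1) := by
          apply mul_le_mul_of_nonneg_right
          · have := (hβ1 j).1; linarith
          · exact Finset.prod_nonneg fun k _ => (hβ1 _).1
      _ = ∏ k ∈ Finset.Icc 1 (T - j), β1 (T - k + 1) := one_mul _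
      _ ≤ ∏ k ∈ Finset.Icc 1 (T - j), β₁ := by
          apply Finset.prod_le_prod (fun k _ => (hβ1 _).1) (fun k _ => (hβ1 _).2)
      _ = β₁ ^ (T - j) := by simp [Nat.Icc_eq_range', Finset.prod_const]
  -- Cauchy–Schwarz
  have hCS : ghatT ^ 2 ≤ (∑ j ∈ Finset.Icc 1 T, a j) *
      ∑ j ∈ Finset.Icc 1 T, a j * g j ^ 2 := by
    have := Finset.sum_mul_sq_le_sq_mul_sq (Finset.Icc 1 T)
      (fun j => Real.sqrt (a j)) (fun j => Real.sqrt (a j) * g j)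
    have e1 : ∀ j, Real.sqrt (a j) * (Real.sqrt (a j) * g j) = a j * g j := by
      intro j
      rw [← mul_assoc, Real.mul_self_sqrt (ha0 j)]
    have e2 : ∀ j, Real.sqrt (a j) ^ 2 = a j := fun j => Real.sq_sqrt (ha0 j)
    have e3 : ∀ j, (Real.sqrt (a j) * g j) ^ 2 = a j * g j ^ 2 := by
      intro j; rw [mul_pow, e2]
    simp only [e1, e2, e3] at this
    rw [hghat]
    exact this
  have hS : (∑ j ∈ Finset.Icc 1 T, a j) ≤ 1 / (1 - β₁) := by
    calc (∑ j ∈ Finset.Icc 1 T, a j) ≤ ∑ j ∈ Finset.Icc 1 T, β₁ ^ (T - j) :=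
          Finset.sum_le_sum fun j _ => hab j
      _ = ∑ i ∈ Finset.range T, β₁ ^ i := by
          refine Finset.sum_nbij' (fun j => T - j) (fun i => T - i) ?_ ?_ ?_ ?_ ?_
          · intro x hx; simp only [Finset.mem_Icc] at hx; simp only [Finset.mem_range]; omega
          · intro x hx; simp only [Finset.mem_range] at hx; simp only [Finset.mem_Icc]; omega
          · intro x hx; simp only [Finset.mem_Icc] at hx; show T - (T - x) = x; omega
          · intro x hx; simp only [Finset.mem_range] at hx; show T - (T - x) = x; omega
          · intro x hx; rfl
      _ ≤ 1 / (1 - β₁) := by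
          rw [geom_sum_eq (by linarith : β₁ ≠ 1),
            show (β₁ ^ T - 1) / (β₁ - 1) = (1 - β₁ ^ T) / (1 - β₁) by
              rw [div_eq_div_iff (by linarith) (by linarith)]; ring]
          have : 0 ≤ β₁ ^ T := pow_nonneg h0 T
          gcongr
          linarith
  have hQ : (∑ j ∈ Finset.Icc 1 T, a j * g j ^ 2) ≤
      ∑ j ∈ Finset.Icc 1 T, β₁ ^ (T - j) * g j ^ 2 :=
    Finset.sum_le_sum fun j _ => mul_le_mul_of_nonneg_right (hab j) (sq_nonneg _)
  calc ghatT ^ 2 ≤ (∑ j ∈ Finset.Icc 1 T, a j) * ∑ j ∈ Finset.Icc 1 T, a j * g j ^ 2 := hCS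
    _ ≤ (1 / (1 - β₁)) * ∑ j ∈ Finset.Icc 1 T, β₁ ^ (T - j) * g j ^ 2 := by
        apply mul_le_mul hS hQ
        · exact Finset.sum_nonneg fun j _ => mul_nonneg (ha0 j) (sq_nonneg _)
        · positivity
end

section
/- Let β₁ ∈ [0,1), ζ > 0, δ > 0, α > 0 and g : ℕ → ℝ. Suppose for all t the nonnegative quantities D_t satisfy D_t ≤ (αζ/(1-β₁)) ∑_{j=1}^{t} β₁^{t-j} g(j)²/(∑_{k=1}^{j} g(k)² + ζδ). Then ∑_{t=1}^{T} D_t ≤ (αζ/(1-β₁)²) · log((∑_{j=1}^{T} g(j)²)/(ζδ) + 1). -/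
theorem stmt_9 (β₁ ζ δ α : ℝ) (h0 : 0 ≤ β₁) (h1 : β₁ < 1)
    (hζ : 0 < ζ) (hδ : 0 < δ) (hα : 0 < α)
    (g D : ℕ → ℝ) (T : ℕ)
    (hD0 : ∀ t, 0 ≤ D t)
    (hD : ∀ t, D t ≤ (α * ζ / (1 - β₁)) *
        ∑ j ∈ Finset.Icc 1 t, β₁ ^ (t - j) * (g j) ^ 2 / (∑ k ∈ Finset.Icc 1 j, (g k) ^ 2 + ζ * δ)) :
    ∑ t ∈ Finset.Icc 1 T, D t
      ≤ (α * ζ / (1 - β₁) ^ 2) *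
          Real.log ((∑ j ∈ Finset.Icc 1 T, (g j) ^ 2) / (ζ * δ) + 1) := by
  have hβ : 0 < 1 - β₁ := by linarith
  set S : ℕ → ℝ := fun j => ∑ k ∈ Finset.Icc 1 j, (g k) ^ 2 with hS
  have hSnn : ∀ j, 0 ≤ S j := fun j =>
    Finset.sum_nonneg fun k _ => sq_nonneg _
  have hSpos : ∀ j, 0 < S j + ζ * δ := fun j => by
    have := hSnn j; have := mul_pos hζ hδ; linarith
  set r : ℕ → ℝ := fun j => (g j) ^ 2 / (S j + ζ * δ) with hr
  have hrnn : ∀ j, 0 ≤ r j := fun j => div_nonneg (sq_nonneg _) (hSpos j).le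
  -- step 1: log-sum bound
  have hSsucc : ∀ j : ℕ, S (j + 1) = S j + (g (j+1)) ^ 2 := by
    intro j
    simp [hS, Finset.sum_Icc_succ_top (Nat.one_le_iff_ne_zero.mpr (Nat.succ_ne_zero j))]
  have key : ∀ n : ℕ, ∑ j ∈ Finset.Icc 1 n, r j ≤
      Real.log (S n + ζ * δ) - Real.log (S 0 + ζ * δ) := by
    intro n
    induction n with
    | zero => simp
    | succ n ih =>
      rw [Finset.sum_Icc_succ_top (Nat.one_le_iff_ne_zero.mpr (Nat.succ_ne_zero n))]
      have hstep : r (n + 1) ≤ Real.log (S (n+1) + ζ * δ) - Real.log (S n + ζ * δ) := by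
        have ha := hSpos n
        have hb := hSpos (n + 1)
        have hlog := Real.log_le_sub_one_of_pos
          (div_pos ha hb)
        rw [Real.log_div ha.ne' hb.ne'] at hlog
        have : r (n + 1) = 1 - (S n + ζ * δ) / (S (n+1) + ζ * δ) := by
          rw [hr]
          field_simp
          rw [hSsucc n]; ring
        rw [this]
        linarith
      linarith
  -- step 2: swap sums and geometric bound
  have swap : ∀ t ∈ Finset.Icc 1 T, True := fun _ _ => trivial
  have hgeom : ∀ j, (∑ t ∈ Finset.Ico j (T+1), β₁ ^ (t - j)) ≤ 1 / (1 - β₁) := by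
    intro j
    rw [Finset.sum_Ico_eq_sum_range]
    have : ∀ l ∈ Finset.range (T + 1 - j), β₁ ^ (j + l - j) = β₁ ^ l := by
      intro l _; congr 1; omega
    rw [Finset.sum_congr rfl this, geom_sum_eq (by linarith : β₁ ≠ 1)]
    have heq : (β₁ ^ (T + 1 - j) - 1) / (β₁ - 1) = (1 - β₁ ^ (T + 1 - j)) / (1 - β₁) := by
      rw [div_eq_div_iff (by linarith) hβ.ne']; ring
    rw [heq]
    have := pow_nonneg h0 (T + 1 - j)
    gcongr
    linarith
  have hdouble : ∑ t ∈ Finset.Icc 1 T,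
      ∑ j ∈ Finset.Icc 1 t, β₁ ^ (t - j) * (g j) ^ 2 / (S j + ζ * δ)
      ≤ (1 / (1 - β₁)) * ∑ j ∈ Finset.Icc 1 T, r j := by
    have hrw : ∀ t j : ℕ, β₁ ^ (t - j) * (g j) ^ 2 / (S j + ζ * δ)
        = β₁ ^ (t - j) * r j := by
      intro t j; rw [hr]; ring
    calc ∑ t ∈ Finset.Icc 1 T, ∑ j ∈ Finset.Icc 1 t, β₁ ^ (t - j) * (g j) ^ 2 / (S j + ζ * δ)
        = ∑ t ∈ Finset.Ico 1 (T+1), ∑ j ∈ Finset.Ico 1 (t+1), β₁ ^ (t - j) * r j := by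
          rw [← Finset.Ico_add_one_right_eq_Icc]
          refine Finset.sum_congr rfl fun t _ => ?_
          rw [← Finset.Ico_add_one_right_eq_Icc]
          exact Finset.sum_congr rfl fun j _ => hrw t j
      _ = ∑ j ∈ Finset.Ico 1 (T+1), ∑ t ∈ Finset.Ico j (T+1), β₁ ^ (t - j) * r j :=
          (Finset.sum_Ico_Ico_comm 1 (T+1) fun j t => β₁ ^ (t - j) * r j).symm
      _ = ∑ j ∈ Finset.Ico 1 (T+1), (∑ t ∈ Finset.Ico j (T+1), β₁ ^ (t - j)) * r j := by
          refine Finset.sum_congr rfl fun j _ => ?_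
          rw [Finset.sum_mul]
      _ ≤ ∑ j ∈ Finset.Ico 1 (T+1), (1 / (1 - β₁)) * r j := by
          refine Finset.sum_le_sum fun j _ => ?_
          exact mul_le_mul_of_nonneg_right (hgeom j) (hrnn j)
      _ = (1 / (1 - β₁)) * ∑ j ∈ Finset.Icc 1 T, r j := by
          rw [Finset.Ico_add_one_right_eq_Icc, Finset.mul_sum]
  -- combine
  have hS0 : S 0 + ζ * δ = ζ * δ := by simp [hS]
  have hlogeq : Real.log (S T + ζ * δ) - Real.log (S 0 + ζ * δ)
      = Real.log (S T / (ζ * δ) + 1) := by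
    rw [hS0, ← Real.log_div (hSpos T).ne' (mul_pos hζ hδ).ne']
    congr 1
    field_simp
  have hc : 0 < α * ζ / (1 - β₁) := div_pos (mul_pos hα hζ) hβ
  calc ∑ t ∈ Finset.Icc 1 T, D t
      ≤ ∑ t ∈ Finset.Icc 1 T, (α * ζ / (1 - β₁)) *
          ∑ j ∈ Finset.Icc 1 t, β₁ ^ (t - j) * (g j) ^ 2 / (S j + ζ * δ) :=
        Finset.sum_le_sum fun t _ => hD t
    _ = (α * ζ / (1 - β₁)) * ∑ t ∈ Finset.Icc 1 T,
          ∑ j ∈ Finset.Icc 1 t, β₁ ^ (t - j) * (g j) ^ 2 / (S j + ζ * δ) := by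
        rw [Finset.mul_sum]
    _ ≤ (α * ζ / (1 - β₁)) * ((1 / (1 - β₁)) * ∑ j ∈ Finset.Icc 1 T, r j) :=
        mul_le_mul_of_nonneg_left hdouble hc.le
    _ ≤ (α * ζ / (1 - β₁)) * ((1 / (1 - β₁)) *
          Real.log (S T / (ζ * δ) + 1)) := by
        have := key T
        rw [hlogeq] at this
        have h2 : 0 < 1 / (1 - β₁) := by positivity
        exact mul_le_mul_of_nonneg_left (mul_le_mul_of_nonneg_left this h2.le) hc.le
    _ = (α * ζ / (1 - β₁) ^ 2) * Real.log (S T / (ζ * δ) + 1) := by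
        rw [sq]; field_simp
end
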